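/- Let k ≥ 3, let U and W be graphons, and let S be a permutation-invariant Markov operator on L²(X^k, μ^{⊗k}) satisfying N ∘ S = S ∘ N, where N averages the last coordinate, and A^{U,k}_{12} ∘ S = S ∘ A^{W,k}_{12}, where A^{V,k}_{12} denotes the 12-adjacency operator of a graphon V on L²(X^k, μ^{⊗k}). Then the step-down S↓ = F ∘ S ∘ I satisfies A^{U,k-1}_{12} ∘ S↓ = S↓ ∘ A^{W,k-1}_{12} on L²(X^{k-1}, μ^{⊗(k-1)}). -/
import Mathlib


open MeasureTheory

noncomputable section

/-- The constant-one function as an element of `L²` of a finite measure. -/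
noncomputable def lpOne {Z : Type*} [MeasurableSpace Z] (ν : Measure Z)
    [IsFiniteMeasure ν] : Lp ℝ 2 ν :=
  Lp.const 2 ν (1 : ℝ)

/-- A Markov operator on `L²`: positivity-preserving, fixing the constants, with adjoint
fixing the constants. -/
def IsMarkovOp {Z : Type*} [MeasurableSpace Z] (ν : Measure Z) [IsFiniteMeasure ν]
    (S : Lp ℝ 2 ν →L[ℝ] Lp ℝ 2 ν) : Prop :=
  (∀ f : Lp ℝ 2 ν, (0 : Z → ℝ) ≤ᵐ[ν] ⇑f → (0 : Z → ℝ) ≤ᵐ[ν] ⇑(S f)) ∧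
    S (lpOne ν) = lpOne ν ∧
    ContinuousLinearMap.adjoint S (lpOne ν) = lpOne ν

/-- An operator on `L²(X^k, μ^{⊗k})` is permutation invariant if it commutes with the
Koopman operator of every coordinate permutation: whenever `g` is (a.e.) the Koopman image
`f ∘ π` of `f`, then `S g` is the Koopman image of `S f`. -/
def PermInv {X : Type*} [MeasurableSpace X] {k : ℕ} (ν : Measure (Fin k → X))
    (S : Lp ℝ 2 ν →L[ℝ] Lp ℝ 2 ν) : Prop :=
  ∀ (π : Equiv.Perm (Fin k)) (f g : Lp ℝ 2 ν),
    (⇑g =ᵐ[ν] fun x => f (fun i => x (π i))) →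
    (⇑(S g) =ᵐ[ν] fun x => (S f) (fun i => x (π i)))

/-- A graphon: symmetric measurable `W : X × X → [0,1]`. -/
structure IsGraphon {X : Type*} [MeasurableSpace X] (W : X → X → ℝ) : Prop where
  measurable : Measurable (Function.uncurry W)
  symm : ∀ x y, W x y = W y x
  nonneg : ∀ x y, 0 ≤ W x y
  le_one : ∀ x y, W x y ≤ 1


/-- An `L²` operator acting a.e. as multiplication by a real function is self-adjoint. -/
lemma mulOp_selfAdjoint {Z : Type*} [MeasurableSpace Z] (ν : Measure Z) (w : Z → ℝ)
    (A : Lp ℝ 2 ν →L[ℝ] Lp ℝ 2 ν)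
    (hA : ∀ f : Lp ℝ 2 ν, ⇑(A f) =ᵐ[ν] fun x => w x * f x) :
    ContinuousLinearMap.adjoint A = A := by
  symm
  rw [ContinuousLinearMap.eq_adjoint_iff]
  intro f g
  rw [L2.inner_def, L2.inner_def]
  refine integral_congr_ae ?_
  filter_upwards [hA f, hA g] with x h1 h2
  simp only [h1, h2, RCLike.inner_apply, conj_trivial]
  ring

lemma proj_qmp {X : Type*} [MeasurableSpace X] (μ : Measure X) [IsProbabilityMeasure μ]
    (r : ℕ) :
    Measure.QuasiMeasurePreserving
      (fun x : Fin (r + 3) → X => fun i : Fin (r + 2) => x i.castSucc)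
      (Measure.pi fun _ : Fin (r + 3) => μ) (Measure.pi fun _ : Fin (r + 2) => μ) := by
  have h1 := (measurePreserving_piFinSuccAbove (fun _ : Fin (r + 3) => μ)
    (Fin.last (r + 2))).quasiMeasurePreserving
  have h2 : Measure.QuasiMeasurePreserving (Prod.snd : X × (Fin (r + 2) → X) → _)
      (μ.prod (Measure.pi fun _ : Fin (r + 2) => μ)) (Measure.pi fun _ : Fin (r + 2) => μ) :=
    Measure.quasiMeasurePreserving_snd
  have h3 := h2.comp h1
  convert h3 using 1
  funext x
  funext i
  simp [MeasurableEquiv.piFinSuccAbove, Fin.insertNthEquiv, Fin.succAbove_last, Fin.init]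


set_option maxHeartbeats 1000000 in
/-- (Here `k = r + 3 ≥ 3`.)  Let `U`, `W` be graphons, `S` a
permutation-invariant Markov operator on `L²(X^k, μ^{⊗k})` commuting with the averaging
operator `N = I ∘ I*` of the last coordinate and satisfying
`A^{U,k}_{12} ∘ S = S ∘ A^{W,k}_{12}` for the `12`-adjacency operators on `L²(X^k)`.
Then the step-down `S↓ = I* ∘ S ∘ I` satisfies `A^{U,k-1}_{12} ∘ S↓ = S↓ ∘ A^{W,k-1}_{12}`
on `L²(X^{k-1}, μ^{⊗(k-1)})`. -/
theorem stmt19 {X : Type*} [MeasurableSpace X] (μ : Measure X) [IsProbabilityMeasure μ]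
    (r : ℕ) (U W : X → X → ℝ) (hU : IsGraphon U) (hW : IsGraphon W)
    (I : Lp ℝ 2 (Measure.pi fun _ : Fin (r + 2) => μ) →L[ℝ]
      Lp ℝ 2 (Measure.pi fun _ : Fin (r + 3) => μ))
    (hI : ∀ f : Lp ℝ 2 (Measure.pi fun _ : Fin (r + 2) => μ),
      ⇑(I f) =ᵐ[Measure.pi fun _ : Fin (r + 3) => μ]
        fun x => f (fun i : Fin (r + 2) => x i.castSucc))
    (AU AW : Lp ℝ 2 (Measure.pi fun _ : Fin (r + 3) => μ) →L[ℝ]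
      Lp ℝ 2 (Measure.pi fun _ : Fin (r + 3) => μ))
    (hAU : ∀ f : Lp ℝ 2 (Measure.pi fun _ : Fin (r + 3) => μ),
      ⇑(AU f) =ᵐ[Measure.pi fun _ : Fin (r + 3) => μ] fun x => U (x 0) (x 1) * f x)
    (hAW : ∀ f : Lp ℝ 2 (Measure.pi fun _ : Fin (r + 3) => μ),
      ⇑(AW f) =ᵐ[Measure.pi fun _ : Fin (r + 3) => μ] fun x => W (x 0) (x 1) * f x)
    (AU' AW' : Lp ℝ 2 (Measure.pi fun _ : Fin (r + 2) => μ) →L[ℝ]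
      Lp ℝ 2 (Measure.pi fun _ : Fin (r + 2) => μ))
    (hAU' : ∀ f : Lp ℝ 2 (Measure.pi fun _ : Fin (r + 2) => μ),
      ⇑(AU' f) =ᵐ[Measure.pi fun _ : Fin (r + 2) => μ] fun x => U (x 0) (x 1) * f x)
    (hAW' : ∀ f : Lp ℝ 2 (Measure.pi fun _ : Fin (r + 2) => μ),
      ⇑(AW' f) =ᵐ[Measure.pi fun _ : Fin (r + 2) => μ] fun x => W (x 0) (x 1) * f x)
    (S : Lp ℝ 2 (Measure.pi fun _ : Fin (r + 3) => μ) →L[ℝ]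
      Lp ℝ 2 (Measure.pi fun _ : Fin (r + 3) => μ))
    (hSM : IsMarkovOp (Measure.pi fun _ : Fin (r + 3) => μ) S)
    (hSP : PermInv (Measure.pi fun _ : Fin (r + 3) => μ) S)
    (hN : (I ∘L ContinuousLinearMap.adjoint I) ∘L S =
      S ∘L (I ∘L ContinuousLinearMap.adjoint I))
    (hA : AU ∘L S = S ∘L AW) :
    AU' ∘L (ContinuousLinearMap.adjoint I ∘L S ∘L I) =
      (ContinuousLinearMap.adjoint I ∘L S ∘L I) ∘L AW' := by
  have key : ∀ (V : X → X → ℝ)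
      (A : Lp ℝ 2 (Measure.pi fun _ : Fin (r + 3) => μ) →L[ℝ] Lp ℝ 2 (Measure.pi fun _ : Fin (r + 3) => μ)) (A' : Lp ℝ 2 (Measure.pi fun _ : Fin (r + 2) => μ) →L[ℝ] Lp ℝ 2 (Measure.pi fun _ : Fin (r + 2) => μ)),
      (∀ f, ⇑(A f) =ᵐ[(Measure.pi fun _ : Fin (r + 3) => μ)] fun x => V (x 0) (x 1) * f x) →
      (∀ f, ⇑(A' f) =ᵐ[(Measure.pi fun _ : Fin (r + 2) => μ)] fun x => V (x 0) (x 1) * f x) →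
      A ∘L I = I ∘L A' := by
    intro V A A' hA3 hA2
    refine ContinuousLinearMap.ext fun f => ?_
    apply Lp.ext
    have h1 : ⇑(A (I f)) =ᵐ[(Measure.pi fun _ : Fin (r + 3) => μ)]
        fun x => V (x 0) (x 1) * f (fun i : Fin (r + 2) => x i.castSucc) := by
      filter_upwards [hA3 (I f), hI f] with x hx hx'
      rw [hx, hx']
    have h2 : ⇑(I (A' f)) =ᵐ[(Measure.pi fun _ : Fin (r + 3) => μ)]
        fun x => V (x 0) (x 1) * f (fun i : Fin (r + 2) => x i.castSucc) := by
      have hp := (proj_qmp μ r).ae_eq_comp (hA2 f)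
      filter_upwards [hI (A' f), hp] with x hx hp'
      rw [hx]
      simpa [Function.comp, Fin.castSucc_zero, Fin.castSucc_one] using hp'
    exact h1.trans h2.symm
  have hUI : AU ∘L I = I ∘L AU' := key U AU AU' hAU hAU'
  have hWI : AW ∘L I = I ∘L AW' := key W AW AW' hAW hAW'
  have hUsa : ContinuousLinearMap.adjoint AU = AU :=
    mulOp_selfAdjoint (Measure.pi fun _ : Fin (r + 3) => μ) (fun x => U (x 0) (x 1)) AU hAU
  have hU'sa : ContinuousLinearMap.adjoint AU' = AU' :=
    mulOp_selfAdjoint (Measure.pi fun _ : Fin (r + 2) => μ) (fun x => U (x 0) (x 1)) AU' hAU'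
  have hFU : ContinuousLinearMap.adjoint I ∘L AU =
      AU' ∘L ContinuousLinearMap.adjoint I := by
    have h := congrArg ContinuousLinearMap.adjoint hUI
    rwa [ContinuousLinearMap.adjoint_comp, ContinuousLinearMap.adjoint_comp, hUsa, hU'sa] at h
  refine ContinuousLinearMap.ext fun f => ?_
  have e1 := ContinuousLinearMap.ext_iff.mp hFU (S (I f))
  have e2 := ContinuousLinearMap.ext_iff.mp hA (I f)
  have e3 := ContinuousLinearMap.ext_iff.mp hWI f
  simp only [ContinuousLinearMap.comp_apply] at e1 e2 e3 ⊢
  rw [← e1, e2, e3]
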